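/- arXiv:1705.05286 — 2 statements merged into one kernel-verified Lean document; each statement's English description precedes it below -/
import Mathlib

section
/- Let P be an n×n positive definite matrix with P = L Lᵀ and let θ > 0. Define V = L exp(θ LᵀL) Lᵀ and Φ = P⁻¹ − V⁻¹. If P ≥ d̄ I with d̄ > 0, then Φ ≤ ((1 − exp(−θ d̄))/d̄) · I. -/
open Matrix
open scoped Matrix.Norms.L2Operator

variable {n : ℕ}

/-- largest singular value = spectral (ℓ²-operator) norm -/
noncomputable def sigma1 {m k : ℕ} (M : Matrix (Fin m) (Fin k) ℝ) : ℝ := ‖M‖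

/-- Thompson part metric -/
noncomputable def dT (P Q : Matrix (Fin n) (Fin n) ℝ) : ℝ :=
  max (Real.log (sigma1 (P⁻¹ * Q))) (Real.log (sigma1 (Q⁻¹ * P)))

/-- spectral function of a matrix: apply `f` to eigenvalues (0 if not Hermitian) -/
noncomputable def matFun (f : ℝ → ℝ) (A : Matrix (Fin n) (Fin n) ℝ) :
    Matrix (Fin n) (Fin n) ℝ :=
  if hA : A.IsHermitian then
    (hA.eigenvectorUnitary : Matrix (Fin n) (Fin n) ℝ) *
      diagonal (fun i => f (hA.eigenvalues i)) *
      star (hA.eigenvectorUnitary : Matrix (Fin n) (Fin n) ℝ)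
  else 0

noncomputable def matRpow (A : Matrix (Fin n) (Fin n) ℝ) (r : ℝ) : Matrix (Fin n) (Fin n) ℝ :=
  matFun (fun x => x ^ r) A

noncomputable def matExp (A : Matrix (Fin n) (Fin n) ℝ) : Matrix (Fin n) (Fin n) ℝ :=
  matFun Real.exp A


/-!
With `S = Lᵀ L` we have `P⁻¹ = L⁻ᵀ L⁻¹` and `V⁻¹ = L⁻ᵀ exp(-θS) L⁻¹`, so
`c I - Φ = L⁻ᵀ (c S - I + exp(-θS)) L⁻¹` for `c = (1 - exp(-θ d̄)) / d̄`. By functional calculus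
the middle factor is `g(S)` with `g x = c x - 1 + exp(-θx)`, and `S` has the same spectrum as
`P = L Lᵀ`, which lies in `[d̄, ∞)`. There `g ≥ 0`, since `x ↦ (1 - exp(-θx)) / x` is
antitone on `(0, ∞)` (the secant slopes of the convex `exp` through `0`).
-/

open Real Set
open scoped MatrixOrder

lemma matFun_eq_cfc {A : Matrix (Fin n) (Fin n) ℝ} (hA : A.IsHermitian) (f : ℝ → ℝ) :
    matFun f A = cfc f A := by
  rw [matFun, dif_pos hA, hA.cfc_eq, IsHermitian.cfc, Unitary.conjStarAlgAut_apply]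
  rfl

lemma one_sub_exp_neg_mul_le {θ d x : ℝ} (hd : 0 < d) (hdx : d ≤ x) :
    1 - exp (-θ * x) ≤ (1 - exp (-θ * d)) / d * x := by
  have hx : 0 < x := hd.trans_le hdx
  have hconv := convexOn_exp.2 (mem_univ (-θ * x)) (mem_univ 0) (div_nonneg hd.le hx.le)
    (sub_nonneg.2 (div_le_one_of_le₀ hdx hx.le)) (add_sub_cancel _ _)
  have hpt : d / x * (-θ * x) = -θ * d := by field_simp
  simp only [smul_eq_mul, mul_zero, add_zero, exp_zero, mul_one, hpt] at hconv
  rw [div_mul_eq_mul_div, le_div_iff₀ hd]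
  have hrhs : x * (d / x * exp (-θ * x) + (1 - d / x)) = d * exp (-θ * x) + (x - d) := by
    field_simp
  linarith [mul_le_mul_of_nonneg_left hconv hx.le]

lemma spectrum_mul_comm_of_isUnit {R A : Type*} [CommSemiring R] [Ring A] [Algebra R A]
    {a b : A} (hb : IsUnit b) : spectrum R (a * b) = spectrum R (b * a) := by
  obtain ⟨u, rfl⟩ := hb
  rw [← spectrum.units_conjugate' (u := u) (a := u * a), Units.inv_mul_cancel_left]

lemma smul_one_sub_inv_sub_inv {ι α : Type*} [Fintype ι] [DecidableEq ι] [CommRing α]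
    {L : Matrix ι ι α} (hL : IsUnit L.det) (c : α) (E : Matrix ι ι α) :
    c • 1 - ((L * Lᵀ)⁻¹ - (L * E * Lᵀ)⁻¹) = (L⁻¹)ᵀ * (c • (Lᵀ * L) - 1 + E⁻¹) * L⁻¹ := by
  have hcancel : (L⁻¹)ᵀ * (Lᵀ * L) * L⁻¹ = 1 := by
    rw [← Matrix.mul_assoc, ← transpose_mul, mul_nonsing_inv _ hL, transpose_one, Matrix.one_mul,
      mul_nonsing_inv _ hL]
  simp only [Matrix.mul_inv_rev, ← transpose_nonsing_inv, Matrix.mul_add, Matrix.add_mul,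
    Matrix.mul_sub, Matrix.sub_mul, Matrix.mul_smul, Matrix.smul_mul, Matrix.mul_one, hcancel,
    Matrix.mul_assoc]
  abel

section Hermitian

variable {ι : Type*} [Fintype ι] [DecidableEq ι] {S : Matrix ι ι ℝ}

lemma inv_cfc_exp_mul (hS : S.IsHermitian) (θ : ℝ) :
    (cfc (fun x => exp (θ * x)) S)⁻¹ = cfc (fun x => exp (-θ * x)) S := by
  rw [nonsing_inv_eq_ringInverse, ← cfc_inv _ _ (fun x _ => (exp_pos _).ne')]
  simp only [neg_mul, exp_neg]

lemma smul_sub_one_add_cfc_exp_nonneg (hS : S.IsHermitian) (θ : ℝ) {d : ℝ} (hd : 0 < d)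
    (hSd : ∀ x ∈ spectrum ℝ S, d ≤ x) :
    0 ≤ ((1 - exp (-θ * d)) / d) • S - 1 + cfc (fun x => exp (-θ * x)) S := by
  set c := (1 - exp (-θ * d)) / d
  rw [← cfc_const_mul_id c S, ← cfc_const_one ℝ S,
    ← cfc_sub (fun x => c * x) (fun _ => 1) S,
    ← cfc_add S (fun x => c * x - 1) (fun x => exp (-θ * x))]
  exact cfc_nonneg fun x hx => by linarith [one_sub_exp_neg_mul_le (θ := θ) hd (hSd x hx)]

end Hermitian

theorem Phi_upper_bound_tau_eq_one_general {n : ℕ} (θ dbar : ℝ)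
    (L P V Φ : Matrix (Fin n) (Fin n) ℝ)
    (hP : P.PosDef) (hPL : P = L * Lᵀ)
    (hd : 0 < dbar)
    (hPd : (P - dbar • (1 : Matrix (Fin n) (Fin n) ℝ)).PosSemidef)
    (hV : V = L * matExp (θ • (Lᵀ * L)) * Lᵀ)
    (hΦ : Φ = P⁻¹ - V⁻¹) :
    (((1 - Real.exp (-θ * dbar)) / dbar) •
        (1 : Matrix (Fin n) (Fin n) ℝ) - Φ).PosSemidef := by
  subst hPL hV hΦ
  have hL : IsUnit L.det := by
    have := hP.det_pos.ne'.isUnit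
    rw [det_mul, det_transpose] at this
    exact isUnit_of_mul_isUnit_left this
  have hS : (Lᵀ * L).IsHermitian := by
    simpa using isHermitian_conjTranspose_mul_self L
  have hspec : ∀ x ∈ spectrum ℝ (Lᵀ * L), dbar ≤ x := by
    rw [spectrum_mul_comm_of_isUnit ((isUnit_iff_isUnit_det L).2 hL)]
    exact (algebraMap_le_iff_le_spectrum (a := L * Lᵀ) hP.isHermitian).1
      (by rwa [Matrix.le_iff, Algebra.algebraMap_eq_smul_one])
  have hexp : matExp (θ • (Lᵀ * L)) = cfc (fun x => exp (θ * x)) (Lᵀ * L) := by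
    rw [matExp, matFun_eq_cfc (hS.smul (IsSelfAdjoint.all θ)), ← cfc_comp_smul θ exp (Lᵀ * L)]
    rfl
  rw [smul_one_sub_inv_sub_inv hL, hexp, inv_cfc_exp_mul hS]
  simpa [conjTranspose_eq_transpose_of_trivial] using
    (smul_sub_one_add_cfc_exp_nonneg hS θ hd hspec).posSemidef.conjTranspose_mul_mul_same L⁻¹

theorem Phi_upper_bound_tau_eq_one {n : ℕ} (θ dbar : ℝ)
    (L P V Φ : Matrix (Fin n) (Fin n) ℝ)
    (hP : P.PosDef) (hPL : P = L * Lᵀ) (hθ0 : 0 < θ)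
    (hd : 0 < dbar)
    (hPd : (P - dbar • (1 : Matrix (Fin n) (Fin n) ℝ)).PosSemidef)
    (hV : V = L * matExp (θ • (Lᵀ * L)) * Lᵀ)
    (hΦ : Φ = P⁻¹ - V⁻¹) :
    (((1 - Real.exp (-θ * dbar)) / dbar) •
        (1 : Matrix (Fin n) (Fin n) ℝ) - Φ).PosSemidef :=
  Phi_upper_bound_tau_eq_one_general θ dbar L P V Φ hP hPL hd hPd hV hΦ
end

section
/- For 0 < τ < 1, a nonzero n×n symmetric positive semidefinite matrix P, and 0 < θ < ((1−τ)‖P‖)⁻¹, the quantity γ_τ(P, θ) = tr(−(1/(τ(1−τ)))(I − θ(1−τ)P)^{τ/(τ−1)} + (1/(1−τ))(I − θ(1−τ)P)^{1/(τ−1)} + (1/τ)I) is strictly positive. -/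
open Matrix
open scoped Matrix.Norms.L2Operator

variable {n : ℕ}

noncomputable def gammaTau {n : ℕ} (τ θ : ℝ) (P : Matrix (Fin n) (Fin n) ℝ) : ℝ :=
  ((-(1/(τ*(1-τ)))) • matRpow (1 - (θ*(1-τ)) • P) (τ/(τ-1))
    + (1/(1-τ)) • matRpow (1 - (θ*(1-τ)) • P) (1/(τ-1))
    + (1/τ) • (1 : Matrix (Fin n) (Fin n) ℝ)).trace

/-!
Write `A = 1 - θ(1-τ)P`. Since `θ(1-τ)‖P‖ < 1`, `A` is positive definite, and `A ≠ 1` because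
`P ≠ 0`. The trace is the sum of a scalar function `g` over the eigenvalues `μ` of `A`, and under
the substitution `x = μ^(1/(τ-1))` the value `τ(1-τ) g(μ) = τx + (1-τ) - x^τ` is the gap in
Bernoulli's inequality for the exponent `τ ∈ (0,1)`: it vanishes only at `x = 1`. So every term
is nonnegative and the eigenvalues different from `1` give positive ones.
-/

noncomputable def gammaTauScalar (τ μ : ℝ) : ℝ :=
  -(1/(τ*(1-τ))) * μ ^ (τ/(τ-1)) + (1/(1-τ)) * μ ^ (1/(τ-1)) + 1/τ

lemma gammaTauScalar_eq {τ μ : ℝ} (hτ0 : τ ≠ 0) (hτ1 : τ ≠ 1) (hμ : 0 ≤ μ) :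
    gammaTauScalar τ μ
      = (τ * μ ^ (1/(τ-1)) + (1 - τ) - (μ ^ (1/(τ-1))) ^ τ) / (τ * (1 - τ)) := by
  have h1τ : 1 - τ ≠ 0 := sub_ne_zero.mpr hτ1.symm
  rw [gammaTauScalar, ← Real.rpow_mul hμ, one_div_mul_eq_div]
  field_simp
  ring_nf

lemma gammaTauScalar_one {τ : ℝ} (hτ0 : τ ≠ 0) (hτ1 : τ ≠ 1) : gammaTauScalar τ 1 = 0 := by
  have h1τ : 1 - τ ≠ 0 := sub_ne_zero.mpr hτ1.symm
  simp only [gammaTauScalar, Real.one_rpow]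
  field_simp
  ring

lemma gammaTauScalar_pos {τ μ : ℝ} (hτ0 : 0 < τ) (hτ1 : τ < 1) (hμ : 0 < μ) (hμ1 : μ ≠ 1) :
    0 < gammaTauScalar τ μ := by
  set x := μ ^ (1/(τ-1)) with hx
  have hx0 : 0 < x := Real.rpow_pos_of_pos hμ _
  have hx1 : x ≠ 1 := by
    intro h
    have hexp : 1/(τ-1) ≠ 0 := one_div_ne_zero (by linarith)
    rw [← Real.rpow_rpow_inv hμ.le hexp, ← hx, h, Real.one_rpow] at hμ1
    exact hμ1 rfl
  have bernoulli : x ^ τ < 1 + τ * (x - 1) := by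
    simpa using rpow_one_add_lt_one_add_mul_self (by linarith) (sub_ne_zero.mpr hx1) hτ0 hτ1
  rw [gammaTauScalar_eq hτ0.ne' hτ1.ne hμ.le]
  apply div_pos <;> nlinarith

lemma gammaTauScalar_nonneg {τ μ : ℝ} (hτ0 : 0 < τ) (hτ1 : τ < 1) (hμ : 0 < μ) :
    0 ≤ gammaTauScalar τ μ := by
  rcases eq_or_ne μ 1 with rfl | hμ1
  · exact (gammaTauScalar_one hτ0.ne' hτ1.ne).ge
  · exact (gammaTauScalar_pos hτ0 hτ1 hμ hμ1).le

lemma trace_matFun (f : ℝ → ℝ) {A : Matrix (Fin n) (Fin n) ℝ} (hA : A.IsHermitian) :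
    (matFun f A).trace = ∑ i, f (hA.eigenvalues i) := by
  rw [matFun, dif_pos hA, trace_mul_cycle, Unitary.coe_star_mul_self, one_mul, trace_diagonal]

lemma gammaTau_eq_sum_gammaTauScalar (τ θ : ℝ) {P : Matrix (Fin n) (Fin n) ℝ}
    (hA : (1 - (θ*(1-τ)) • P).IsHermitian) :
    gammaTau τ θ P = ∑ i, gammaTauScalar τ (hA.eigenvalues i) := by
  simp only [gammaTau, gammaTauScalar, matRpow, trace_add, trace_smul, trace_one,
    trace_matFun _ hA, Finset.sum_add_distrib, Finset.mul_sum, smul_eq_mul, Finset.sum_const,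
    Finset.card_univ, Fintype.card_fin, nsmul_eq_mul]
  ring

lemma Matrix.IsHermitian.eq_one_of_eigenvalues_eq_one {𝕜 ι : Type*} [RCLike 𝕜] [Fintype ι]
    [DecidableEq ι] {A : Matrix ι ι 𝕜} (hA : A.IsHermitian) (h : ∀ i, hA.eigenvalues i = 1) :
    A = 1 := by
  have hdiag : (RCLike.ofReal ∘ hA.eigenvalues : ι → 𝕜) = fun _ ↦ 1 := funext (by simp [h])
  rw [hA.spectral_theorem, hdiag, diagonal_one, map_one]

lemma dotProduct_mulVec_le_l2_opNorm_mul {ι : Type*} [Fintype ι] [DecidableEq ι]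
    (M : Matrix ι ι ℝ) (x : ι → ℝ) : x ⬝ᵥ (M *ᵥ x) ≤ ‖M‖ * (x ⬝ᵥ x) := by
  set v : EuclideanSpace ℝ ι := WithLp.toLp 2 x
  have hinner (y : ι → ℝ) : inner ℝ v (WithLp.toLp 2 y) = x ⬝ᵥ y := by
    simp [v, EuclideanSpace.inner_eq_star_dotProduct, dotProduct_comm]
  calc x ⬝ᵥ (M *ᵥ x) = inner ℝ v (WithLp.toLp 2 (M *ᵥ x)) := (hinner _).symm
    _ ≤ ‖v‖ * ‖WithLp.toLp 2 (M *ᵥ x)‖ := real_inner_le_norm _ _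
    _ ≤ ‖v‖ * (‖M‖ * ‖v‖) := by gcongr; exact M.l2_opNorm_mulVec v
    _ = ‖M‖ * inner ℝ v v := by rw [real_inner_self_eq_norm_sq]; ring
    _ = ‖M‖ * (x ⬝ᵥ x) := by rw [hinner]

lemma posDef_one_sub_of_l2_opNorm_lt_one {ι : Type*} [Fintype ι] [DecidableEq ι]
    {M : Matrix ι ι ℝ} (hM : M.IsHermitian) (h : ‖M‖ < 1) : (1 - M).PosDef := by
  refine posDef_iff_dotProduct_mulVec.mpr ⟨isHermitian_one.sub hM, fun x hx ↦ ?_⟩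
  have hxx : 0 < x ⬝ᵥ x := dotProduct_self_star_pos_iff.mpr hx
  have hMx := dotProduct_mulVec_le_l2_opNorm_mul M x
  simp only [star_trivial, sub_mulVec, one_mulVec, dotProduct_sub]
  nlinarith

theorem gammaTau_pos {n : ℕ} (τ θ : ℝ)
    (hτ0 : 0 < τ) (hτ1 : τ < 1)
    (P : Matrix (Fin n) (Fin n) ℝ)
    (hP : P.PosSemidef) (hP0 : P ≠ 0)
    (hθ0 : 0 < θ) (hθ : θ < ((1 - τ) * sigma1 P)⁻¹) :
    0 < gammaTau τ θ P := by
  set c := θ * (1 - τ)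
  have hc0 : 0 < c := mul_pos hθ0 (by linarith)
  have hcP : ‖c • P‖ < 1 := by
    have hd : 0 < (1 - τ) * ‖P‖ := mul_pos (by linarith) (norm_pos_iff.mpr hP0)
    calc ‖c • P‖ = θ * ((1 - τ) * ‖P‖) := by
          rw [norm_smul, Real.norm_of_nonneg hc0.le, mul_assoc]
      _ < ((1 - τ) * ‖P‖)⁻¹ * ((1 - τ) * ‖P‖) := mul_lt_mul_of_pos_right hθ hd
      _ = 1 := inv_mul_cancel₀ hd.ne'
  have hA : (1 - c • P).PosDef :=
    posDef_one_sub_of_l2_opNorm_lt_one (hP.isHermitian.smul (IsSelfAdjoint.all c)) hcP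
  obtain ⟨j, hj⟩ : ∃ j, hA.isHermitian.eigenvalues j ≠ 1 := by
    by_contra! h
    have hcP0 : c • P = 0 := sub_eq_self.mp (hA.isHermitian.eq_one_of_eigenvalues_eq_one h)
    exact hP0 ((smul_eq_zero.mp hcP0).resolve_left hc0.ne')
  rw [gammaTau_eq_sum_gammaTauScalar τ θ hA.isHermitian]
  exact Finset.sum_pos' (fun i _ ↦ gammaTauScalar_nonneg hτ0 hτ1 (hA.eigenvalues_pos i))
    ⟨j, Finset.mem_univ j, gammaTauScalar_pos hτ0 hτ1 (hA.eigenvalues_pos j) hj⟩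
end
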